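/- arXiv:1701.05051 — 3 statements merged into one kernel-verified Lean document; each statement's English description precedes it below -/
import Mathlib

section
/- Define C_max(ρ) = max over phase vectors α of (1/2)‖U(α) ρ U(α)† − ρ‖₁ and C_tr(ρ) = min over diagonal density matrices σ of (1/2)‖ρ − σ‖₁, where ‖·‖₁ is the trace norm. Then C_tr(ρ) ≤ C_max(ρ) ≤ 2 C_tr(ρ) for every density matrix ρ. -/
open Matrix Complex
open scoped ComplexOrder

/-- The positive semidefinite square root of a positive semidefinite matrix
(removed from Mathlib; restored with its former definition). -/
noncomputable def Matrix.PosSemidef.sqrt {n : Type*} {𝕜 : Type*} [Fintype n] [RCLike 𝕜]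
    [DecidableEq n] {A : Matrix n n 𝕜} (hA : Matrix.PosSemidef A) : Matrix n n 𝕜 :=
  hA.1.eigenvectorUnitary.1 * Matrix.diagonal ((↑) ∘ (Real.sqrt ·) ∘ hA.1.eigenvalues) *
  (star hA.1.eigenvectorUnitary : Matrix n n 𝕜)

/-- Trace norm `‖A‖₁ = tr √(AᴴA)`. -/
noncomputable def traceNorm {d : ℕ} (A : Matrix (Fin d) (Fin d) ℂ) : ℝ :=
  ((Matrix.posSemidef_conjTranspose_mul_self A).sqrt).trace.re

/-- Diagonal phase unitary `U(α) = Σ_j e^{iα_j}|j⟩⟨j|`. -/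
noncomputable def phaseU {d : ℕ} (α : Fin d → ℝ) : Matrix (Fin d) (Fin d) ℂ :=
  Matrix.diagonal fun j => Complex.exp (Complex.I * (α j : ℂ))

/-- `C_max(ρ)`: optimal visibility, the supremum over phase settings of
`(1/2)‖U(α)ρU(α)† − ρ‖₁`. -/
noncomputable def Cmax {d : ℕ} (ρ : Matrix (Fin d) (Fin d) ℂ) : ℝ :=
  sSup {x : ℝ | ∃ α : Fin d → ℝ,
    x = (1 / 2) * traceNorm (phaseU α * ρ * (phaseU α)ᴴ - ρ)}

/-- `C_tr(ρ)`: trace-distance measure of coherence, the infimum over diagonal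
density matrices `σ` of `(1/2)‖ρ − σ‖₁`. -/
noncomputable def Ctr {d : ℕ} (ρ : Matrix (Fin d) (Fin d) ℂ) : ℝ :=
  sInf {x : ℝ | ∃ q : Fin d → ℝ, (∀ j, 0 ≤ q j) ∧ (∑ j, q j) = 1 ∧
    x = (1 / 2) * traceNorm (ρ - Matrix.diagonal (fun j => (q j : ℂ)))}

/-!
By the polar decomposition `A = W √(AᴴA)` with `W` unitary, `‖A‖₁ = max_U Re tr(U A)` over unitary
`U`, since `Re tr(U P) ≤ tr P` for `P ⪰ 0`; this gives the triangle inequality and the unitary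
invariance of `‖·‖₁`. A diagonal `σ` is fixed by every `U(α)`, so
`U(α)ρU(α)† − ρ = U(α)(ρ − σ)U(α)† + (σ − ρ)` has trace norm at most `2‖ρ − σ‖₁`, whence
`C_max ≤ 2 C_tr`. Conversely, averaging `U(α_k)ρU(α_k)†` over the Fourier phases
`α_k(j) = 2πkj/d` kills the off-diagonal entries, so `ρ − diag ρ` is the average of the
`ρ − U(α_k)ρU(α_k)†`; as `diag ρ` is itself a diagonal density matrix,
`C_tr ≤ ½‖ρ − diag ρ‖₁ ≤ C_max`.
-/

namespace Matrix

variable {n 𝕜 : Type*} [Fintype n] [DecidableEq n] [RCLike 𝕜]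

section Sqrt

open scoped MatrixOrder

lemma PosSemidef.sqrt_eq_cfcSqrt {A : Matrix n n 𝕜} (hA : A.PosSemidef) :
    hA.sqrt = CFC.sqrt A := by
  rw [CFC.sqrt_eq_real_sqrt A hA.nonneg, cfcₙ_eq_cfc, hA.1.cfc_eq]
  rfl

lemma PosSemidef.posSemidef_sqrt {A : Matrix n n 𝕜} (hA : A.PosSemidef) : hA.sqrt.PosSemidef := by
  rw [hA.sqrt_eq_cfcSqrt]
  exact (CFC.sqrt_nonneg A).posSemidef

lemma PosSemidef.sqrt_mul_self {A : Matrix n n 𝕜} (hA : A.PosSemidef) :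
    hA.sqrt * hA.sqrt = A := by
  rw [hA.sqrt_eq_cfcSqrt]
  exact CFC.sqrt_mul_sqrt_self A hA.nonneg

end Sqrt

/-- Since `‖A x‖ = ‖B x‖` for all `x`, the map `B x ↦ A x` is a well-defined isometry on the range
of `B`, which extends to a unitary. -/
theorem exists_mem_unitaryGroup_eq_mul_of_conjTranspose_mul_self_eq
    {A B : Matrix n n 𝕜} (h : Aᴴ * A = Bᴴ * B) : ∃ W ∈ unitaryGroup n 𝕜, A = W * B := by
  let e := toEuclideanCLM (n := n) (𝕜 := 𝕜)
  have hab : (e A).adjoint ∘L e A = (e B).adjoint ∘L e B := by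
    have := congrArg e h
    rwa [map_mul, map_mul, ← star_eq_conjTranspose, ← star_eq_conjTranspose, map_star, map_star,
      ContinuousLinearMap.star_eq_adjoint, ContinuousLinearMap.star_eq_adjoint] at this
  have hnorm : ∀ x, ‖e A x‖ = ‖e B x‖ := fun x => by
    rw [← sq_eq_sq₀ (norm_nonneg _) (norm_nonneg _), (e A).apply_norm_sq_eq_inner_adjoint_left,
      (e B).apply_norm_sq_eq_inner_adjoint_left, hab]
  let a : EuclideanSpace 𝕜 n →ₗ[𝕜] EuclideanSpace 𝕜 n := e A
  let b : EuclideanSpace 𝕜 n →ₗ[𝕜] EuclideanSpace 𝕜 n := e B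
  have hker : LinearMap.ker b ≤ LinearMap.ker a := fun x hx => by
    rw [LinearMap.mem_ker, ← norm_eq_zero] at hx ⊢
    exact (hnorm x).trans hx
  let l := (LinearMap.ker b).liftQ a hker ∘ₗ b.quotKerEquivRange.symm.toLinearMap
  have hl : ∀ x, l ⟨b x, LinearMap.mem_range_self b x⟩ = a x := fun x => by
    simp [l]
  let L : LinearMap.range b →ₗᵢ[𝕜] EuclideanSpace 𝕜 n :=
    { l with norm_map' := by rintro ⟨_, x, rfl⟩; exact congrArg norm (hl x) |>.trans (hnorm x) }
  refine ⟨e.symm L.extend.toContinuousLinearMap, ?_, EquivLike.injective e ?_⟩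
  · rw [mem_unitaryGroup_iff']
    apply EquivLike.injective e
    rw [map_mul, map_star, map_one, e.apply_symm_apply, ContinuousLinearMap.star_eq_adjoint]
    exact L.extend.adjoint_comp_self
  · ext1 x
    rw [map_mul, e.apply_symm_apply]
    exact ((L.extend_apply ⟨b x, LinearMap.mem_range_self b x⟩).trans (hl x)).symm

theorem exists_mem_unitaryGroup_eq_mul_sqrt (A : Matrix n n 𝕜) :
    ∃ W ∈ unitaryGroup n 𝕜, A = W * (posSemidef_conjTranspose_mul_self A).sqrt := by
  have hS := (posSemidef_conjTranspose_mul_self A).posSemidef_sqrt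
  refine exists_mem_unitaryGroup_eq_mul_of_conjTranspose_mul_self_eq ?_
  rw [hS.1.eq, PosSemidef.sqrt_mul_self]

theorem PosSemidef.re_trace_mul_le {P U : Matrix n n 𝕜} (hP : P.PosSemidef)
    (hU : U ∈ unitaryGroup n 𝕜) : RCLike.re (U * P).trace ≤ RCLike.re P.trace := by
  set Q := hP.1.eigenvectorUnitary
  set V := star (Q : Matrix n n 𝕜) * U * Q
  have hV : V ∈ unitaryGroup n 𝕜 := mul_mem (mul_mem (Unitary.star_mem Q.2) hU) Q.2
  have htr : (U * P).trace = ∑ i, V i i * hP.1.eigenvalues i := by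
    conv_lhs => rw [hP.1.spectral_theorem, Unitary.conjStarAlgAut_apply, ← mul_assoc, ← mul_assoc,
      trace_mul_cycle, ← mul_assoc]
    simp only [trace, diag, mul_diagonal, Function.comp_apply, V, Q]
  rw [htr, hP.1.trace_eq_sum_eigenvalues, map_sum, map_sum]
  refine Finset.sum_le_sum fun i _ => ?_
  rw [RCLike.re_mul_ofReal, RCLike.ofReal_re]
  exact mul_le_of_le_one_left (hP.eigenvalues_nonneg i)
    ((RCLike.re_le_norm _).trans (entry_norm_bound_of_unitary hV i i))

end Matrix

section TraceNorm

variable {d : ℕ}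

theorem traceNorm_nonneg (A : Matrix (Fin d) (Fin d) ℂ) : 0 ≤ traceNorm A :=
  (Complex.nonneg_iff.mp (posSemidef_conjTranspose_mul_self A).posSemidef_sqrt.trace_nonneg).1

theorem re_trace_mul_le_traceNorm {U : Matrix (Fin d) (Fin d) ℂ} (hU : U ∈ unitaryGroup (Fin d) ℂ)
    (A : Matrix (Fin d) (Fin d) ℂ) : (U * A).trace.re ≤ traceNorm A := by
  obtain ⟨W, hW, hA⟩ := exists_mem_unitaryGroup_eq_mul_sqrt A
  conv_lhs => rw [hA, ← mul_assoc]
  exact (posSemidef_conjTranspose_mul_self A).posSemidef_sqrt.re_trace_mul_le (mul_mem hU hW)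

theorem exists_re_trace_mul_eq_traceNorm (A : Matrix (Fin d) (Fin d) ℂ) :
    ∃ U ∈ unitaryGroup (Fin d) ℂ, (U * A).trace.re = traceNorm A := by
  obtain ⟨W, hW, hA⟩ := exists_mem_unitaryGroup_eq_mul_sqrt A
  refine ⟨star W, Unitary.star_mem hW, ?_⟩
  conv_lhs => rw [hA, ← mul_assoc, Unitary.star_mul_self_of_mem hW, one_mul]
  rfl

theorem traceNorm_add_le (A B : Matrix (Fin d) (Fin d) ℂ) :
    traceNorm (A + B) ≤ traceNorm A + traceNorm B := by
  obtain ⟨U, hU, hUAB⟩ := exists_re_trace_mul_eq_traceNorm (A + B)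
  rw [← hUAB, mul_add, trace_add, add_re]
  exact add_le_add (re_trace_mul_le_traceNorm hU A) (re_trace_mul_le_traceNorm hU B)

theorem traceNorm_ofReal_smul {c : ℝ} (hc : 0 ≤ c) (A : Matrix (Fin d) (Fin d) ℂ) :
    traceNorm ((c : ℂ) • A) = c * traceNorm A := by
  have hre : ∀ U : Matrix (Fin d) (Fin d) ℂ, (U * ((c : ℂ) • A)).trace.re = c * (U * A).trace.re :=
    fun U => by rw [mul_smul_comm, trace_smul, smul_eq_mul, re_ofReal_mul]
  obtain ⟨U, hU, hUcA⟩ := exists_re_trace_mul_eq_traceNorm ((c : ℂ) • A)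
  obtain ⟨V, hV, hVA⟩ := exists_re_trace_mul_eq_traceNorm A
  refine le_antisymm ?_ ?_
  · rw [← hUcA, hre]
    exact mul_le_mul_of_nonneg_left (re_trace_mul_le_traceNorm hU A) hc
  · rw [← hVA, ← hre]
    exact re_trace_mul_le_traceNorm hV _

theorem traceNorm_zero : traceNorm (0 : Matrix (Fin d) (Fin d) ℂ) = 0 := by
  simpa using traceNorm_ofReal_smul le_rfl (0 : Matrix (Fin d) (Fin d) ℂ)

theorem traceNorm_sum_le {ι : Type*} (s : Finset ι) (f : ι → Matrix (Fin d) (Fin d) ℂ) :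
    traceNorm (∑ i ∈ s, f i) ≤ ∑ i ∈ s, traceNorm (f i) :=
  Finset.le_sum_of_subadditive traceNorm traceNorm_zero.le traceNorm_add_le s f

theorem traceNorm_mul_mul_of_mem_unitaryGroup {V W : Matrix (Fin d) (Fin d) ℂ}
    (hV : V ∈ unitaryGroup (Fin d) ℂ) (hW : W ∈ unitaryGroup (Fin d) ℂ)
    (A : Matrix (Fin d) (Fin d) ℂ) : traceNorm (V * A * W) = traceNorm A := by
  have key : ∀ V ∈ unitaryGroup (Fin d) ℂ, ∀ W ∈ unitaryGroup (Fin d) ℂ, ∀ A,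
      traceNorm (V * A * W) ≤ traceNorm A := by
    intro V hV W hW A
    obtain ⟨U, hU, hUA⟩ := exists_re_trace_mul_eq_traceNorm (V * A * W)
    rw [← hUA, show U * (V * A * W) = U * V * A * W by simp only [mul_assoc], trace_mul_comm,
      show W * (U * V * A) = W * U * V * A by simp only [mul_assoc]]
    exact re_trace_mul_le_traceNorm (mul_mem (mul_mem hW hU) hV) A
  refine le_antisymm (key V hV W hW A) ?_
  have h := key (star V) (Unitary.star_mem hV) (star W) (Unitary.star_mem hW) (V * A * W)
  rwa [show star V * (V * A * W) * star W = (star V * V) * A * (W * star W) by simp only [mul_assoc],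
    Unitary.star_mul_self_of_mem hV, Unitary.mul_star_self_of_mem hW, one_mul, mul_one] at h

theorem traceNorm_neg (A : Matrix (Fin d) (Fin d) ℂ) : traceNorm (-A) = traceNorm A := by
  have h := traceNorm_mul_mul_of_mem_unitaryGroup (-1 : unitaryGroup (Fin d) ℂ).2 (one_mem _) A
  rwa [Unitary.coe_neg, OneMemClass.coe_one, neg_one_mul, mul_one] at h

theorem traceNorm_sub_comm (A B : Matrix (Fin d) (Fin d) ℂ) :
    traceNorm (A - B) = traceNorm (B - A) := by
  rw [← neg_sub, traceNorm_neg]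

theorem traceNorm_mul_mul_conjTranspose_sub_le {U σ : Matrix (Fin d) (Fin d) ℂ}
    (hU : U ∈ unitaryGroup (Fin d) ℂ) (hσ : U * σ * Uᴴ = σ) (ρ : Matrix (Fin d) (Fin d) ℂ) :
    traceNorm (U * ρ * Uᴴ - ρ) ≤ 2 * traceNorm (ρ - σ) :=
  calc traceNorm (U * ρ * Uᴴ - ρ) = traceNorm (U * (ρ - σ) * Uᴴ + (σ - ρ)) := by
        rw [mul_sub, sub_mul, hσ, sub_add_sub_cancel]
    _ ≤ traceNorm (U * (ρ - σ) * Uᴴ) + traceNorm (σ - ρ) := traceNorm_add_le _ _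
    _ = 2 * traceNorm (ρ - σ) := by
        rw [traceNorm_mul_mul_of_mem_unitaryGroup (W := Uᴴ) hU (Unitary.star_mem hU),
          traceNorm_sub_comm σ]
        ring

end TraceNorm

theorem IsPrimitiveRoot.sum_range_pow_div_pow {K : Type*} [Field K] {ω : K} {d : ℕ}
    (hω : IsPrimitiveRoot ω d) {j l : ℕ} (hj : j < d) (hl : l < d) :
    ∑ k ∈ Finset.range d, (ω ^ j / ω ^ l) ^ k = if j = l then (d : K) else 0 := by
  have hω0 : ∀ i : ℕ, ω ^ i ≠ 0 := fun i => pow_ne_zero i (hω.ne_zero (by omega))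
  split_ifs with hjl
  · simp [hjl, div_self (hω0 l)]
  · have hne : ω ^ j / ω ^ l ≠ 1 := fun h =>
      hjl (hω.pow_inj hj hl ((div_eq_one_iff_eq (hω0 l)).mp h))
    rw [geom_sum_eq hne, div_pow, ← pow_mul, ← pow_mul, mul_comm j, mul_comm l, pow_mul, pow_mul,
      hω.pow_eq_one, one_pow, one_pow, div_one, sub_self, zero_div]

section Phases

variable {d : ℕ}

theorem phaseU_mem_unitaryGroup (α : Fin d → ℝ) : phaseU α ∈ unitaryGroup (Fin d) ℂ := by
  rw [mem_unitaryGroup_iff', star_eq_conjTranspose, phaseU, diagonal_conjTranspose,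
    diagonal_mul_diagonal, ← diagonal_one]
  congr 1
  ext j
  simp [← Complex.exp_conj, ← Complex.exp_add]

theorem phaseU_mul_diagonal_mul_conjTranspose (α : Fin d → ℝ) (q : Fin d → ℂ) :
    phaseU α * diagonal q * (phaseU α)ᴴ = diagonal q := by
  rw [show phaseU α * diagonal q = diagonal q * phaseU α by
      simp only [phaseU, diagonal_mul_diagonal, mul_comm],
    mul_assoc, ← star_eq_conjTranspose, Unitary.mul_star_self_of_mem (phaseU_mem_unitaryGroup α),
    mul_one]

noncomputable def fourierPhase (d : ℕ) (k : Fin d) : Fin d → ℝ :=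
  fun j => 2 * Real.pi * k * j / d

theorem sum_phaseU_fourierPhase_conj (hd : d ≠ 0) (ρ : Matrix (Fin d) (Fin d) ℂ) :
    ∑ k, phaseU (fourierPhase d k) * ρ * (phaseU (fourierPhase d k))ᴴ
      = (d : ℂ) • diagonal ρ.diag := by
  set ω := Complex.exp (2 * Real.pi * I / d)
  have hω : IsPrimitiveRoot ω d := Complex.isPrimitiveRoot_exp d hd
  have hexp : ∀ k j : Fin d, Complex.exp (I * (fourierPhase d k j : ℂ)) = (ω ^ (j : ℕ)) ^ (k : ℕ) :=
    fun k j => by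
      rw [← pow_mul, ← Complex.exp_nat_mul, fourierPhase]
      push_cast
      ring_nf
  have hnorm : ∀ i : ℕ, ‖ω ^ i‖ = 1 := fun i => by rw [norm_pow, hω.norm'_eq_one hd, one_pow]
  ext j l
  have hentry : ∀ k : Fin d, (phaseU (fourierPhase d k) * ρ * (phaseU (fourierPhase d k))ᴴ) j l
      = (ω ^ (j : ℕ) / ω ^ (l : ℕ)) ^ (k : ℕ) * ρ j l := fun k => by
    simp only [phaseU, diagonal_conjTranspose, mul_diagonal, diagonal_mul, Pi.star_apply, hexp]
    rw [RCLike.star_def, ← Complex.inv_eq_conj (by rw [norm_pow, hnorm, one_pow]), div_pow,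
      div_eq_mul_inv]
    ring
  rw [Matrix.sum_apply, Finset.sum_congr rfl fun k _ => hentry k, ← Finset.sum_mul,
    Fin.sum_univ_eq_sum_range (fun i => (ω ^ (j : ℕ) / ω ^ (l : ℕ)) ^ i),
    hω.sum_range_pow_div_pow j.isLt l.isLt, Matrix.smul_apply, diagonal_apply]
  simp only [Fin.val_inj]
  split_ifs with hjl
  · rw [hjl, diag_apply, smul_eq_mul]
  · rw [zero_mul, smul_zero]

theorem traceNorm_sub_diagonal_diag_le (hd : d ≠ 0) (ρ : Matrix (Fin d) (Fin d) ℂ) {c : ℝ}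
    (h : ∀ α, traceNorm (phaseU α * ρ * (phaseU α)ᴴ - ρ) ≤ c) :
    traceNorm (ρ - diagonal ρ.diag) ≤ c := by
  have hsum : ((d : ℝ) : ℂ) • (ρ - diagonal ρ.diag)
      = ∑ k, (ρ - phaseU (fourierPhase d k) * ρ * (phaseU (fourierPhase d k))ᴴ) := by
    rw [Finset.sum_sub_distrib, sum_phaseU_fourierPhase_conj hd, Finset.sum_const,
      Finset.card_univ, Fintype.card_fin, smul_sub, ← Nat.cast_smul_eq_nsmul ℂ]
    push_cast
    rfl
  have hdpos : (0 : ℝ) < d := by positivity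
  refine le_of_mul_le_mul_left ?_ hdpos
  calc (d : ℝ) * traceNorm (ρ - diagonal ρ.diag)
      = traceNorm (((d : ℝ) : ℂ) • (ρ - diagonal ρ.diag)) := (traceNorm_ofReal_smul hdpos.le _).symm
    _ ≤ ∑ k, traceNorm (ρ - phaseU (fourierPhase d k) * ρ * (phaseU (fourierPhase d k))ᴴ) :=
        hsum ▸ traceNorm_sum_le _ _
    _ ≤ ∑ _k : Fin d, c := Finset.sum_le_sum fun k _ => traceNorm_sub_comm _ _ ▸ h _
    _ = d * c := by simp

end Phases

theorem Matrix.PosSemidef.exists_ofReal_eq_diag {n : Type*} [Fintype n] {ρ : Matrix n n ℂ}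
    (hρ : ρ.PosSemidef) (htr : ρ.trace = 1) :
    ∃ q : n → ℝ, (∀ j, 0 ≤ q j) ∧ ∑ j, q j = 1 ∧ (fun j => (q j : ℂ)) = ρ.diag := by
  refine ⟨fun j => (ρ j j).re, fun j => (Complex.nonneg_iff.mp hρ.diag_nonneg).1, ?_,
    hρ.1.coe_re_diag⟩
  simpa [trace] using congrArg re htr

section Coherence

variable {d : ℕ}

theorem Ctr_le (ρ : Matrix (Fin d) (Fin d) ℂ) {q : Fin d → ℝ} (hq : ∀ j, 0 ≤ q j)
    (hq1 : ∑ j, q j = 1) : Ctr ρ ≤ 1 / 2 * traceNorm (ρ - diagonal fun j => (q j : ℂ)) :=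
  csInf_le ⟨0, by rintro _ ⟨q, -, -, rfl⟩; exact mul_nonneg (by norm_num) (traceNorm_nonneg _)⟩
    ⟨q, hq, hq1, rfl⟩

theorem le_Ctr {ρ : Matrix (Fin d) (Fin d) ℂ} {x : ℝ}
    (hne : ∃ q : Fin d → ℝ, (∀ j, 0 ≤ q j) ∧ ∑ j, q j = 1)
    (h : ∀ q : Fin d → ℝ, (∀ j, 0 ≤ q j) → ∑ j, q j = 1 →
      x ≤ 1 / 2 * traceNorm (ρ - diagonal fun j => (q j : ℂ))) : x ≤ Ctr ρ := by
  obtain ⟨q, hq, hq1⟩ := hne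
  exact le_csInf ⟨_, q, hq, hq1, rfl⟩ (by rintro _ ⟨q, hq, hq1, rfl⟩; exact h q hq hq1)

theorem le_Cmax (ρ : Matrix (Fin d) (Fin d) ℂ) (α : Fin d → ℝ) :
    1 / 2 * traceNorm (phaseU α * ρ * (phaseU α)ᴴ - ρ) ≤ Cmax ρ := by
  refine le_csSup ⟨traceNorm ρ, ?_⟩ ⟨α, rfl⟩
  rintro _ ⟨β, rfl⟩
  have := traceNorm_mul_mul_conjTranspose_sub_le (phaseU_mem_unitaryGroup β)
    (by rw [mul_zero, zero_mul]) ρ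
  rw [sub_zero] at this
  linarith

theorem Cmax_le {ρ : Matrix (Fin d) (Fin d) ℂ} {x : ℝ}
    (h : ∀ α, 1 / 2 * traceNorm (phaseU α * ρ * (phaseU α)ᴴ - ρ) ≤ x) : Cmax ρ ≤ x :=
  csSup_le ⟨_, 0, rfl⟩ (by rintro _ ⟨α, rfl⟩; exact h α)

end Coherence

/-- `C_tr(ρ) ≤ C_max(ρ) ≤ 2 C_tr(ρ)` for every density matrix `ρ`. -/
theorem Ctr_le_Cmax_le_two_Ctr {d : ℕ} (ρ : Matrix (Fin d) (Fin d) ℂ)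
    (hρ : ρ.PosSemidef) (htr : ρ.trace = 1) :
    Ctr ρ ≤ Cmax ρ ∧ Cmax ρ ≤ 2 * Ctr ρ := by
  obtain ⟨p, hp, hp1, hpρ⟩ := hρ.exists_ofReal_eq_diag htr
  have hd : d ≠ 0 := by
    rintro rfl
    simp at hp1
  constructor
  · have hdephase : traceNorm (ρ - diagonal ρ.diag) ≤ 2 * Cmax ρ :=
      traceNorm_sub_diagonal_diag_le hd ρ fun α => by linarith [le_Cmax ρ α]
    calc Ctr ρ ≤ 1 / 2 * traceNorm (ρ - diagonal ρ.diag) := hpρ ▸ Ctr_le ρ hp hp1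
      _ ≤ Cmax ρ := by linarith
  · refine Cmax_le fun α => ?_
    have : 1 / 4 * traceNorm (phaseU α * ρ * (phaseU α)ᴴ - ρ) ≤ Ctr ρ :=
      le_Ctr ⟨p, hp, hp1⟩ fun q _ _ => by
        linarith [traceNorm_mul_mul_conjTranspose_sub_le (phaseU_mem_unitaryGroup α)
          (phaseU_mul_diagonal_mul_conjTranspose α fun j => (q j : ℂ)) ρ]
    linarith
end

section
/- If K is a strictly incoherent Kraus operator on ℂ^d, then K can be written as K = π D where D is a diagonal matrix and π is a permutation matrix. -/
open Matrix

/-- A strictly incoherent Kraus operator (each column supported on a single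
basis vector, with injective index map `k`) factors as a permutation matrix
times a diagonal matrix. -/
theorem strictly_incoherent_eq_perm_mul_diagonal {d : ℕ}
    (K : Matrix (Fin d) (Fin d) ℂ)
    (h : ∃ k : Fin d → Fin d, Function.Injective k ∧
        ∃ c : Fin d → ℂ, ∀ i j, K i j = if i = k j then c j else 0) :
    ∃ (σ : Equiv.Perm (Fin d)) (D : Fin d → ℂ),
      K = σ.permMatrix ℂ * Matrix.diagonal D := by
  obtain ⟨k, hk, c, hc⟩ := h
  let e : Equiv.Perm (Fin d) := Equiv.ofBijective k (Finite.injective_iff_bijective.mp hk)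
  refine ⟨e⁻¹, c, ?_⟩
  ext i j
  rw [hc i j]
  simp [Equiv.Perm.permMatrix, PEquiv.toMatrix, mul_apply, diagonal, e, Equiv.eq_symm_apply,
    Equiv.ofBijective_apply, eq_comm, Equiv.toPEquiv_apply, Equiv.Perm.inv_def]
end

section
/- For any density matrix ρ on ℂ^d, the minimum of the quantum relative entropy D(ρ‖σ) = tr ρ(log ρ − log σ) over all diagonal density matrices σ with full support on the support of Δ(ρ) is attained at σ = Δ(ρ) and equals S(Δ(ρ)) − S(ρ), where S is the von Neumann entropy. -/
/-! Since `σ = diag q` is diagonal, so is `log σ = diag (log q)`, and `tr ρ log σ` only sees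
the diagonal `p` of `ρ`: `D(ρ‖diag q) = −S(ρ) − ∑ p_j log q_j`. Minimising over `q` is then the
classical Gibbs inequality `∑ p_j log q_j ≤ ∑ p_j log p_j`, with equality at `q = p`. -/

open Matrix Complex
open scoped ComplexOrder

open Classical in
/-- Matrix logarithm of a Hermitian matrix, via its spectral decomposition
(junk value `0` on non-Hermitian matrices). -/
noncomputable def matLog {d : ℕ} (A : Matrix (Fin d) (Fin d) ℂ) :
    Matrix (Fin d) (Fin d) ℂ :=
  if hA : A.IsHermitian then
    (hA.eigenvectorUnitary : Matrix (Fin d) (Fin d) ℂ) *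
      Matrix.diagonal (fun i => (Real.log (hA.eigenvalues i) : ℂ)) *
      (star (hA.eigenvectorUnitary : Matrix (Fin d) (Fin d) ℂ))
  else 0

/-- Von Neumann entropy `S(τ) = −tr(τ log τ)`. -/
noncomputable def vnEntropy {d : ℕ} (A : Matrix (Fin d) (Fin d) ℂ) : ℝ :=
  -(A * matLog A).trace.re

/-- Quantum relative entropy `D(ρ‖σ) = tr ρ (log ρ − log σ)`. -/
noncomputable def relEnt {d : ℕ} (A B : Matrix (Fin d) (Fin d) ℂ) : ℝ :=
  (A * (matLog A - matLog B)).trace.re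

/-- If `U` intertwines two diagonal matrices, then `U i j ≠ 0` forces `a i = b j`, so `U` also
intertwines any function of them. This is what makes `matLog` of a diagonal matrix diagonal even
though its eigenvector basis is not unique when entries repeat. -/
theorem Matrix.diagonal_comp_mul_eq_mul_diagonal_comp {n R : Type*} [Fintype n] [DecidableEq n]
    [CommRing R] [NoZeroDivisors R] {a b : n → R} {U : Matrix n n R}
    (h : diagonal a * U = U * diagonal b) (f : R → R) :
    diagonal (f ∘ a) * U = U * diagonal (f ∘ b) := by
  ext i j
  have hij := congr_fun₂ h i j
  simp only [diagonal_mul, mul_diagonal, Function.comp_apply] at hij ⊢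
  by_cases hU : U i j = 0
  · simp [hU]
  · rw [mul_right_cancel₀ hU (hij.trans (mul_comm _ _)), mul_comm]

theorem matLog_diagonal {d : ℕ} (q : Fin d → ℝ) :
    matLog (diagonal fun j => (q j : ℂ)) = diagonal fun j => (Real.log (q j) : ℂ) := by
  have hA : (diagonal fun j => (q j : ℂ)).IsHermitian :=
    isHermitian_diagonal_iff.mpr fun j => by simp [IsSelfAdjoint]
  set U := (hA.eigenvectorUnitary : Matrix (Fin d) (Fin d) ℂ)
  have hAU :
      (diagonal fun j => (q j : ℂ)) * U = U * diagonal (RCLike.ofReal ∘ hA.eigenvalues) := by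
    conv_lhs => rw [hA.spectral_theorem]
    rw [Unitary.conjStarAlgAut_apply, mul_assoc, mul_assoc, Unitary.coe_star_mul_self, mul_one]
  have hlog := diagonal_comp_mul_eq_mul_diagonal_comp hAU fun z => (Real.log z.re : ℂ)
  simp only [Function.comp_def, ofReal_re, coe_algebraMap] at hlog
  rw [matLog, dif_pos hA, ← hlog, mul_assoc,
    Unitary.mul_star_self_of_mem hA.eigenvectorUnitary.2, mul_one]

theorem re_trace_mul_matLog_diagonal {d : ℕ} (A : Matrix (Fin d) (Fin d) ℂ) (q : Fin d → ℝ) :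
    (A * matLog (diagonal fun j => (q j : ℂ))).trace.re =
      ∑ j, (A j j).re * Real.log (q j) := by
  simp [matLog_diagonal, Matrix.trace, Complex.re_sum]

theorem relEnt_diagonal {d : ℕ} (ρ : Matrix (Fin d) (Fin d) ℂ) (q : Fin d → ℝ) :
    relEnt ρ (diagonal fun j => (q j : ℂ)) =
      -vnEntropy ρ - ∑ j, (ρ j j).re * Real.log (q j) := by
  rw [relEnt, vnEntropy, mul_sub, trace_sub, Complex.sub_re, re_trace_mul_matLog_diagonal, neg_neg]

theorem vnEntropy_diagonal {d : ℕ} (p : Fin d → ℝ) :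
    vnEntropy (diagonal fun j => (p j : ℂ)) = -∑ j, p j * Real.log (p j) := by
  simp [vnEntropy, re_trace_mul_matLog_diagonal]

theorem Real.mul_log_sub_mul_log_le_sub {p q : ℝ} (hp : 0 ≤ p) (hq : 0 ≤ q)
    (hpq : p ≠ 0 → q ≠ 0) : p * Real.log q - p * Real.log p ≤ q - p := by
  rcases hp.eq_or_lt with rfl | hp
  · simpa using hq
  have hq := hq.lt_of_ne (hpq hp.ne').symm
  calc p * Real.log q - p * Real.log p = p * Real.log (q / p) := by
        rw [Real.log_div hq.ne' hp.ne']; ring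
    _ ≤ p * (q / p - 1) := by gcongr; exact Real.log_le_sub_one_of_pos (div_pos hq hp)
    _ = q - p := by field_simp

theorem Real.sum_mul_log_le_sum_mul_log {ι : Type*} [Fintype ι] {p q : ι → ℝ}
    (hp : ∀ i, 0 ≤ p i) (hq : ∀ i, 0 ≤ q i) (hpq : ∀ i, p i ≠ 0 → q i ≠ 0)
    (hsum : ∑ i, q i ≤ ∑ i, p i) :
    ∑ i, p i * Real.log (q i) ≤ ∑ i, p i * Real.log (p i) := by
  have := Finset.sum_le_sum fun i (_ : i ∈ Finset.univ) =>
    Real.mul_log_sub_mul_log_le_sub (hp i) (hq i) (hpq i)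
  rw [Finset.sum_sub_distrib, Finset.sum_sub_distrib] at this
  linarith

/-- The minimum of `D(ρ‖σ)` over diagonal density matrices `σ` whose support
contains the support of `Δ(ρ)` is attained at `σ = Δ(ρ)` and equals
`S(Δ(ρ)) − S(ρ)`. -/
theorem relEnt_min_diagonal {d : ℕ} (ρ : Matrix (Fin d) (Fin d) ℂ)
    (hρ : ρ.PosSemidef) (htr : ρ.trace = 1) :
    IsLeast {x : ℝ | ∃ q : Fin d → ℝ, (∀ j, 0 ≤ q j) ∧ (∑ j, q j) = 1 ∧
        (∀ j, ρ j j ≠ 0 → q j ≠ 0) ∧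
        x = relEnt ρ (Matrix.diagonal (fun j => (q j : ℂ)))}
      (vnEntropy (Matrix.diagonal (fun j => ρ j j)) - vnEntropy ρ) := by
  obtain ⟨p, hρp⟩ : ∃ p : Fin d → ℝ, ∀ j, ρ j j = p j :=
    ⟨_, fun j => (hρ.isHermitian.coe_re_apply_self j).symm⟩
  have hp0 : ∀ j, 0 ≤ p j := fun j => Complex.zero_le_real.mp (hρp j ▸ hρ.diag_nonneg)
  have hp1 : ∑ j, p j = 1 := by
    exact_mod_cast (by simpa [Matrix.trace, hρp] using htr : ∑ j, (p j : ℂ) = 1)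
  simp only [hρp, Complex.ofReal_ne_zero, relEnt_diagonal, vnEntropy_diagonal, Complex.ofReal_re]
  refine ⟨⟨p, hp0, hp1, fun _ => id, by ring⟩, ?_⟩
  rintro _ ⟨q, hq0, hq1, hpq, rfl⟩
  have := Real.sum_mul_log_le_sum_mul_log hp0 hq0 hpq (hq1.trans hp1.symm).le
  linarith
end
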